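/- Let n ≥ 1, let σ be a permutation of {1,…,n} with permutation matrix P = P_σ, and let k ∈ SO(n,ℝ). The following are equivalent: (a) there exist a unit lower triangular matrix l with P l P⁻¹ unit lower triangular, a diagonal matrix a with strictly positive diagonal entries, and a unit upper triangular matrix m such that l = k·a·m; (b) k = u·l₀ for some u upper triangular with positive diagonal and l₀ unit lower triangular, AND P k P⁻¹ = u′·l′ for some u′ upper triangular with positive diagonal and some unit lower triangular l′ such that P⁻¹ l′ P is unit lower triangular. -/

import Mathlib

open Matrix

/-- The permutation matrix of `σ`: `(P_σ)_{ab} = 1` if `a = σ b`, else `0`. -/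
def permMat {n : ℕ} (σ : Equiv.Perm (Fin n)) : Matrix (Fin n) (Fin n) ℝ :=
  Matrix.of fun a b => if a = σ b then (1 : ℝ) else 0

/-- Unit lower triangular: `1`s on the diagonal, `0`s above it. -/
def IsUnitLower {n : ℕ} (M : Matrix (Fin n) (Fin n) ℝ) : Prop :=
  (∀ i, M i i = 1) ∧ ∀ i j : Fin n, i < j → M i j = 0

/-- Unit upper triangular: `1`s on the diagonal, `0`s below it. -/
def IsUnitUpper {n : ℕ} (M : Matrix (Fin n) (Fin n) ℝ) : Prop :=
  (∀ i, M i i = 1) ∧ ∀ i j : Fin n, j < i → M i j = 0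

/-- Upper triangular with strictly positive diagonal entries. -/
def IsUpperPos {n : ℕ} (M : Matrix (Fin n) (Fin n) ℝ) : Prop :=
  (∀ i j : Fin n, j < i → M i j = 0) ∧ ∀ i, 0 < M i i

/-- Diagonal with strictly positive diagonal entries. -/
def IsPosDiagonal {n : ℕ} (M : Matrix (Fin n) (Fin n) ℝ) : Prop :=
  (∀ i j : Fin n, i ≠ j → M i j = 0) ∧ ∀ i, 0 < M i i

/-- `SO(n,ℝ)`. -/
def IsSO {n : ℕ} (k : Matrix (Fin n) (Fin n) ℝ) : Prop :=
  kᵀ * k = 1 ∧ k.det = 1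

/-!
Writing `v = (a m)⁻¹`, condition (a) says `k = l v` with `v` upper triangular with positive
diagonal and `l` lower unitriangular both before and after conjugation by `P`. Conjugation by `P`
turns `v` into a matrix that is upper triangular for the order transported by `σ`, and Gaussian
elimination preserves this shape: the Schur complement of the first pivot is again triangular for
that order. So `P k P⁻¹ = (P l P⁻¹)(P v P⁻¹)` has an LU factorisation whose upper factor is
triangular for both orders. Since `kᵀ = k⁻¹`, any factorisation `k = X Y` yields
`k = (X⁻¹)ᵀ (Y⁻¹)ᵀ`, exchanging lower and upper factors; this turns the LU factorisations into the
UL factorisations of (b). The same argument applied to `kᵀ` gives the converse.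
-/

open Matrix Function OrderDual

theorem Matrix.BlockTriangular.mul_apply_self {ι α R : Type*} [Fintype ι] [LinearOrder α]
    [NonUnitalNonAssocSemiring R] {M N : Matrix ι ι R} {b : ι → α}
    (hM : M.BlockTriangular b) (hN : N.BlockTriangular b) (hb : Injective b) (i : ι) :
    (M * N) i i = M i i * N i i := by
  rw [mul_apply, Finset.sum_eq_single i]
  · intro k _ hki
    rcases lt_or_gt_of_ne (hb.ne hki) with h | h
    · rw [hM h, zero_mul]
    · rw [hN h, mul_zero]
  · simp

theorem Matrix.BlockTriangular.inv_apply_self {ι α K : Type*} [Fintype ι] [DecidableEq ι]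
    [LinearOrder α] [Field K] {M : Matrix ι ι K} {b : ι → α}
    (hM : M.BlockTriangular b) (hb : Injective b) (hdet : IsUnit M.det) (i : ι) :
    M⁻¹ i i = (M i i)⁻¹ := by
  have := M.invertibleOfIsUnitDet hdet
  have h := congrFun (congrFun (M.nonsing_inv_mul hdet) i) i
  rw [(blockTriangular_inv_of_blockTriangular hM).mul_apply_self hM hb, one_apply_eq] at h
  exact eq_inv_of_mul_eq_one_left h

theorem Matrix.transpose_eq_inv_mul_inv {ι R : Type*} [Fintype ι] [DecidableEq ι] [CommRing R]
    {K X Y : Matrix ι ι R} (hK : Kᵀ * K = 1) (h : K = X * Y) : Kᵀ = Y⁻¹ * X⁻¹ := by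
  rw [← inv_eq_left_inv hK, h, Matrix.mul_inv_rev]

theorem Matrix.mul_diagonal_inv_mul_diagonal_mul {ι K : Type*} [Fintype ι] [DecidableEq ι]
    [Field K] (X Y : Matrix ι ι K) {e : ι → K} (he : ∀ i, e i ≠ 0) :
    X * diagonal e⁻¹ * (diagonal e * Y) = X * Y := by
  have he' : (fun i => e⁻¹ i * e i) = fun _ => 1 := funext fun i => inv_mul_cancel₀ (he i)
  rw [Matrix.mul_assoc, ← Matrix.mul_assoc (diagonal _), diagonal_mul_diagonal, he', diagonal_one,
    Matrix.one_mul]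

section Triangular

variable {n : ℕ} {L M V : Matrix (Fin n) (Fin n) ℝ}

theorem IsUnitLower.isLowerTriangular (hL : IsUnitLower L) : L.IsLowerTriangular :=
  fun i j h => hL.2 i j h

theorem IsUpperPos.isUpperTriangular (hV : IsUpperPos V) : V.IsUpperTriangular :=
  fun i j h => hV.1 i j h

theorem IsUnitLower.isUnit_det (hL : IsUnitLower L) : IsUnit L.det := by
  simp [det_of_isLowerTriangular L hL.isLowerTriangular, hL.1]

theorem IsUpperPos.isUnit_det (hV : IsUpperPos V) : IsUnit V.det := by
  rw [det_of_isUpperTriangular hV.isUpperTriangular]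
  exact (Finset.prod_pos fun i _ => hV.2 i).ne'.isUnit

theorem IsUnitLower.mul (hL : IsUnitLower L) (hM : IsUnitLower M) : IsUnitLower (L * M) :=
  ⟨fun i => by
    rw [hL.isLowerTriangular.mul_apply_self hM.isLowerTriangular toDual.injective, hL.1, hM.1,
      one_mul],
    fun _ _ h => hL.isLowerTriangular.mul hM.isLowerTriangular h⟩

theorem IsUpperPos.mul (hV : IsUpperPos V) (hM : IsUpperPos M) : IsUpperPos (V * M) :=
  ⟨fun _ _ h => hV.isUpperTriangular.mul hM.isUpperTriangular h, fun i => by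
    rw [hV.isUpperTriangular.mul_apply_self hM.isUpperTriangular injective_id]
    exact mul_pos (hV.2 i) (hM.2 i)⟩

theorem IsUnitLower.inv (hL : IsUnitLower L) : IsUnitLower L⁻¹ := by
  have := L.invertibleOfIsUnitDet hL.isUnit_det
  refine ⟨fun i => ?_, fun _ _ h => blockTriangular_inv_of_blockTriangular hL.isLowerTriangular h⟩
  rw [hL.isLowerTriangular.inv_apply_self toDual.injective hL.isUnit_det, hL.1, inv_one]

theorem IsUpperPos.inv (hV : IsUpperPos V) : IsUpperPos V⁻¹ := by
  have := V.invertibleOfIsUnitDet hV.isUnit_det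
  refine ⟨fun _ _ h => blockTriangular_inv_of_blockTriangular hV.isUpperTriangular h, fun i => ?_⟩
  rw [hV.isUpperTriangular.inv_apply_self injective_id hV.isUnit_det]
  exact inv_pos.2 (hV.2 i)

theorem IsPosDiagonal.isUpperPos (hM : IsPosDiagonal M) : IsUpperPos M :=
  ⟨fun i j h => hM.1 i j h.ne', hM.2⟩

theorem IsUnitUpper.isUpperPos (hM : IsUnitUpper M) : IsUpperPos M :=
  ⟨hM.2, fun i => (hM.1 i).symm ▸ one_pos⟩

theorem isUnitLower_submatrix_symm (σ : Equiv.Perm (Fin n)) (hd : ∀ i, M i i = 1)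
    (hM : M.BlockTriangular (toDual ∘ σ)) : IsUnitLower (M.submatrix σ.symm σ.symm) :=
  ⟨fun i => hd _, fun i j h => hM (by simpa using h)⟩

end Triangular

section PermMat

variable {n : ℕ} (σ : Equiv.Perm (Fin n)) (M : Matrix (Fin n) (Fin n) ℝ)

theorem permMat_eq_toMatrix : permMat σ = σ.symm.toPEquiv.toMatrix := by
  ext a b
  simp [permMat, PEquiv.toMatrix_apply, Equiv.eq_symm_apply, eq_comm]

theorem permMat_mul : permMat σ * M = M.submatrix σ.symm id := by
  rw [permMat_eq_toMatrix, PEquiv.toMatrix_toPEquiv_mul]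

theorem mul_permMat : M * permMat σ = M.submatrix id σ := by
  rw [permMat_eq_toMatrix, PEquiv.mul_toMatrix_toPEquiv, Equiv.symm_symm]

theorem inv_permMat : (permMat σ)⁻¹ = permMat σ.symm := by
  refine inv_eq_right_inv ?_
  rw [← Matrix.one_mul (permMat σ.symm), mul_permMat, permMat_mul, submatrix_submatrix]
  exact submatrix_one_equiv σ.symm

theorem permMat_mul_mul_inv : permMat σ * M * (permMat σ)⁻¹ = M.submatrix σ.symm σ.symm := by
  rw [inv_permMat, mul_permMat, permMat_mul, submatrix_submatrix]
  rfl

theorem inv_permMat_mul_mul : (permMat σ)⁻¹ * M * permMat σ = M.submatrix σ σ := by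
  rw [inv_permMat, mul_permMat, permMat_mul, submatrix_submatrix]
  rfl

end PermMat

theorem exists_unitLower_mul_upperPos_of_blockTriangular {α : Type*} [LinearOrder α] :
    ∀ {n : ℕ} {C : Matrix (Fin n) (Fin n) ℝ} {w : Fin n → α}, Injective w →
      C.BlockTriangular w → (∀ i, 0 < C i i) →
      ∃ L V, IsUnitLower L ∧ IsUpperPos V ∧ V.BlockTriangular w ∧ C = L * V
  | 0, _, _, _, _, _ => ⟨1, 1, ⟨finZeroElim, finZeroElim⟩, ⟨finZeroElim, finZeroElim⟩, finZeroElim,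
      Matrix.ext fun i => i.elim0⟩
  | n + 1, C, w, hw, hC, hd => by
    have hc : C 0 0 ≠ 0 := (hd 0).ne'
    -- `C i 0 * C 0 j ≠ 0` would force `w i ≤ w 0 ≤ w j`, so the Schur complement `C'` of the
    -- pivot `C 0 0` is again `w`-triangular, with the same diagonal.
    have hcross : ∀ i j : Fin n, w j.succ ≤ w i.succ → C i.succ 0 * C 0 j.succ = 0 := by
      intro i j hji
      by_contra hne
      obtain ⟨hi0, h0j⟩ := mul_ne_zero_iff.1 hne
      have hi : w i.succ ≤ w 0 := not_lt.1 fun h => hi0 (hC h)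
      have hj : w 0 ≤ w j.succ := not_lt.1 fun h => h0j (hC h)
      exact Fin.succ_ne_zero i (hw (le_antisymm hi (hj.trans hji)))
    set C' : Matrix (Fin n) (Fin n) ℝ :=
      of fun i j => C i.succ j.succ - C i.succ 0 * C 0 j.succ / C 0 0
    have hC'w : C'.BlockTriangular (w ∘ Fin.succ) := fun i j hij => by
      simp [C', hC hij, hcross i j hij.le]
    have hC'd : ∀ i, 0 < C' i i := fun i => by simpa [C', hcross i i le_rfl] using hd i.succ
    obtain ⟨L', V', hL', hV', hV'w, hC'LV⟩ :=
      exists_unitLower_mul_upperPos_of_blockTriangular (hw.comp (Fin.succ_injective n)) hC'w hC'd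
    refine ⟨of (Fin.cons (Fin.cons 1 0) fun i => Fin.cons (C i.succ 0 / C 0 0) (L' i)),
      of (Fin.cons (C 0) fun i => Fin.cons 0 (V' i)), ⟨fun i => ?_, fun i j hij => ?_⟩,
      ⟨fun i j hij => ?_, fun i => ?_⟩, fun i j hij => ?_, ?_⟩
    · cases i using Fin.cases <;> simp [hL'.1]
    · cases i using Fin.cases <;> cases j using Fin.cases <;> simp_all [hL'.2]
    · cases i using Fin.cases <;> cases j using Fin.cases <;> simp_all [hV'.1]
    · cases i using Fin.cases <;> simp [hV'.2, hd 0]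
    · cases i using Fin.cases with
      | zero => simpa using hC hij
      | succ i =>
        cases j using Fin.cases with
        | zero => simp
        | succ j => simpa using hV'w hij
    · ext i j
      cases i using Fin.cases with
      | zero => cases j using Fin.cases <;> simp [mul_apply, Fin.sum_univ_succ]
      | succ i =>
        cases j using Fin.cases with
        | zero => simp [mul_apply, Fin.sum_univ_succ, div_mul_cancel₀ _ hc]
        | succ j =>
          have hij : C' i j = ∑ k, L' i k * V' k j := by rw [hC'LV, mul_apply]
          simp only [C', of_apply] at hij
          simp [mul_apply, Fin.sum_univ_succ, ← hij]
          ring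

theorem exists_unitLower_mul_upperPos_of_eq_unitLower_mul {α : Type*} [LinearOrder α] {n : ℕ}
    {K B C : Matrix (Fin n) (Fin n) ℝ} {w : Fin n → α} (hw : Injective w) (hB : IsUnitLower B)
    (hC : C.BlockTriangular w) (hd : ∀ i, 0 < C i i) (hK : K = B * C) :
    ∃ L V, IsUnitLower L ∧ IsUpperPos V ∧ V.BlockTriangular w ∧ K = L * V := by
  obtain ⟨L, V, hL, hV, hVw, rfl⟩ := exists_unitLower_mul_upperPos_of_blockTriangular hw hC hd
  exact ⟨B * L, V, hB.mul hL, hV, hVw, by rw [hK, Matrix.mul_assoc]⟩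

section Orthogonal

variable {n : ℕ} {k K L V l v : Matrix (Fin n) (Fin n) ℝ}

theorem exists_upperPos_mul_unitLower_of_orthogonal {α : Type*} [LinearOrder α] {w : Fin n → α}
    (hK : Kᵀ * K = 1) (hL : IsUnitLower L) (hV : IsUpperPos V) (hVw : V.BlockTriangular w)
    (h : K = L * V) :
    ∃ u l₀, IsUpperPos u ∧ IsUnitLower l₀ ∧ l₀.BlockTriangular (toDual ∘ w) ∧ K = u * l₀ := by
  have hK' : K = L⁻¹ᵀ * V⁻¹ᵀ := by
    rw [← transpose_transpose K, transpose_eq_inv_mul_inv hK h, transpose_mul]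
  have hVw' : V⁻¹.BlockTriangular w := by
    have := V.invertibleOfIsUnitDet hV.isUnit_det
    exact blockTriangular_inv_of_blockTriangular hVw
  have hV0 : ∀ i, V i i ≠ 0 := fun i => (hV.2 i).ne'
  refine ⟨L⁻¹ᵀ * diagonal (fun i => V i i)⁻¹, diagonal (fun i => V i i) * V⁻¹ᵀ,
    ⟨fun i j hij => ?_, fun i => ?_⟩, ⟨fun i => ?_, fun i j hij => ?_⟩, fun i j hij => ?_,
    by rw [mul_diagonal_inv_mul_diagonal_mul _ _ hV0, hK']⟩
  · simp [hL.inv.2 j i hij]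
  · simpa [hL.inv.1 i] using hV.2 i
  · simp [hV.isUpperTriangular.inv_apply_self injective_id hV.isUnit_det, hV0 i]
  · simp [hV.inv.1 j i hij]
  · simp [hVw' hij]

theorem exists_upperPos_eq_mul_of_eq_mul_mul {a m : Matrix (Fin n) (Fin n) ℝ}
    (ha : IsPosDiagonal a) (hm : IsUnitUpper m) (h : l = k * a * m) :
    ∃ v, IsUpperPos v ∧ k = l * v := by
  have ham := ha.isUpperPos.mul hm.isUpperPos
  refine ⟨(a * m)⁻¹, ham.inv, ?_⟩
  rw [h, Matrix.mul_assoc k a m, Matrix.mul_assoc, mul_nonsing_inv _ ham.isUnit_det,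
    Matrix.mul_one]

theorem exists_eq_mul_mul_of_eq_mul (hv : IsUpperPos v) (h : k = l * v) :
    ∃ a m, IsPosDiagonal a ∧ IsUnitUpper m ∧ l = k * a * m := by
  have hv0 : ∀ i, v i i ≠ 0 := fun i => (hv.2 i).ne'
  refine ⟨diagonal (fun i => v i i)⁻¹, diagonal (fun i => v i i) * v⁻¹,
    ⟨fun i j hij => diagonal_apply_ne _ hij, fun i => by simpa using hv.2 i⟩,
    ⟨fun i => ?_, fun i j hij => by simp [hv.inv.1 i j hij]⟩, ?_⟩
  · simp [hv.isUpperTriangular.inv_apply_self injective_id hv.isUnit_det, hv0 i]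
  · rw [mul_diagonal_inv_mul_diagonal_mul _ _ hv0, h, Matrix.mul_assoc,
      mul_nonsing_inv _ hv.isUnit_det, Matrix.mul_one]

theorem exists_upperPos_mul_unitLower_submatrix (σ : Equiv.Perm (Fin n)) (hk : kᵀ * k = 1)
    (hl : IsUnitLower (l.submatrix σ.symm σ.symm)) (hv : IsUpperPos v) (h : k = l * v) :
    ∃ u' l', IsUpperPos u' ∧ IsUnitLower l' ∧ IsUnitLower (l'.submatrix σ σ) ∧
      k.submatrix σ.symm σ.symm = u' * l' := by
  have hK : (k.submatrix σ.symm σ.symm)ᵀ * k.submatrix σ.symm σ.symm = 1 := by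
    rw [transpose_submatrix, submatrix_mul_equiv, hk, submatrix_one_equiv]
  obtain ⟨L, V, hL, hV, hVσ, hLV⟩ := exists_unitLower_mul_upperPos_of_eq_unitLower_mul
    (K := k.submatrix σ.symm σ.symm) σ.symm.injective hl hv.isUpperTriangular.submatrix
    (fun i => hv.2 _) (by rw [h, submatrix_mul_equiv])
  obtain ⟨u', l', hu', hl', hl'σ, hul'⟩ :=
    exists_upperPos_mul_unitLower_of_orthogonal hK hL hV hVσ hLV
  exact ⟨u', l', hu', hl', isUnitLower_submatrix_symm σ.symm hl'.1 hl'σ, hul'⟩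

theorem exists_unitLower_mul_upperPos_submatrix (σ : Equiv.Perm (Fin n))
    {u' l' : Matrix (Fin n) (Fin n) ℝ} (hk : kᵀ * k = 1) (hu' : IsUpperPos u')
    (hl' : IsUnitLower (l'.submatrix σ σ)) (h : k.submatrix σ.symm σ.symm = u' * l') :
    ∃ l v, IsUnitLower l ∧ IsUnitLower (l.submatrix σ.symm σ.symm) ∧ IsUpperPos v ∧ k = l * v := by
  have hk' : k = u'.submatrix σ σ * l'.submatrix σ σ := by
    rw [submatrix_mul_equiv, ← h, submatrix_submatrix]
    simp
  have hkT := transpose_eq_inv_mul_inv hk hk'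
  rw [inv_submatrix_equiv u'] at hkT
  obtain ⟨L, V, hL, hV, hVσ, hkLV⟩ := exists_unitLower_mul_upperPos_of_eq_unitLower_mul
    σ.injective hl'.inv hu'.inv.isUpperTriangular.submatrix (fun i => hu'.inv.2 _) hkT
  have hV0 : ∀ i, V i i ≠ 0 := fun i => (hV.2 i).ne'
  refine ⟨Vᵀ * diagonal (fun i => V i i)⁻¹, diagonal (fun i => V i i) * Lᵀ,
    ⟨fun i => ?_, fun i j hij => ?_⟩, isUnitLower_submatrix_symm σ (fun i => ?_) ?_,
    ⟨fun i j hij => ?_, fun i => ?_⟩, ?_⟩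
  · simp [hV0 i]
  · simp [hV.1 j i hij]
  · simp [hV0 i]
  · exact hVσ.transpose.mul (blockTriangular_diagonal _)
  · simp [hL.2 j i hij]
  · simpa [hL.1 i] using hV.2 i
  · rw [mul_diagonal_inv_mul_diagonal_mul _ _ hV0, ← transpose_mul, ← hkLV, transpose_transpose]

end Orthogonal

theorem stmt_5_general (n : ℕ) (σ : Equiv.Perm (Fin n))
    (k : Matrix (Fin n) (Fin n) ℝ) (hk : IsSO k) :
    (∃ l a m : Matrix (Fin n) (Fin n) ℝ,
        IsUnitLower l ∧ IsUnitLower (permMat σ * l * (permMat σ)⁻¹) ∧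
        IsPosDiagonal a ∧ IsUnitUpper m ∧ l = k * a * m) ↔
    ((∃ u l₀ : Matrix (Fin n) (Fin n) ℝ, IsUpperPos u ∧ IsUnitLower l₀ ∧ k = u * l₀) ∧
      (∃ u' l' : Matrix (Fin n) (Fin n) ℝ, IsUpperPos u' ∧ IsUnitLower l' ∧
        IsUnitLower ((permMat σ)⁻¹ * l' * permMat σ) ∧
        permMat σ * k * (permMat σ)⁻¹ = u' * l')) := by
  simp only [permMat_mul_mul_inv, inv_permMat_mul_mul]
  constructor
  · rintro ⟨l, a, m, hl, hlσ, ha, hm, hlkam⟩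
    obtain ⟨v, hv, hklv⟩ := exists_upperPos_eq_mul_of_eq_mul_mul ha hm hlkam
    obtain ⟨u, l₀, hu, hl₀, -, hkul₀⟩ :=
      exists_upperPos_mul_unitLower_of_orthogonal (w := id) hk.1 hl hv hv.isUpperTriangular hklv
    exact ⟨⟨u, l₀, hu, hl₀, hkul₀⟩, exists_upperPos_mul_unitLower_submatrix σ hk.1 hlσ hv hklv⟩
  · rintro ⟨-, u', l', hu', -, hl'σ, hkul'⟩
    obtain ⟨l, v, hl, hlσ, hv, hklv⟩ :=
      exists_unitLower_mul_upperPos_submatrix σ hk.1 hu' hl'σ hkul'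
    obtain ⟨a, m, ha, hm, hlkam⟩ := exists_eq_mul_mul_of_eq_mul hv hklv
    exact ⟨l, a, m, hl, hlσ, ha, hm, hlkam⟩

theorem stmt_5 (n : ℕ) (hn : 1 ≤ n) (σ : Equiv.Perm (Fin n))
    (k : Matrix (Fin n) (Fin n) ℝ) (hk : IsSO k) :
    (∃ l a m : Matrix (Fin n) (Fin n) ℝ,
        IsUnitLower l ∧ IsUnitLower (permMat σ * l * (permMat σ)⁻¹) ∧
        IsPosDiagonal a ∧ IsUnitUpper m ∧ l = k * a * m) ↔
    ((∃ u l₀ : Matrix (Fin n) (Fin n) ℝ, IsUpperPos u ∧ IsUnitLower l₀ ∧ k = u * l₀) ∧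
      (∃ u' l' : Matrix (Fin n) (Fin n) ℝ, IsUpperPos u' ∧ IsUnitLower l' ∧
        IsUnitLower ((permMat σ)⁻¹ * l' * permMat σ) ∧
        permMat σ * k * (permMat σ)⁻¹ = u' * l')) :=
  stmt_5_general n σ k hk
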